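/- Let n > d be positive integers and let A be a d × n integer matrix such that: the homomorphism ℤⁿ → ℤ^d determined by A is surjective, the d × (n−1) matrix Ā obtained by deleting the first column of A has rank d, and the homomorphism ℤ^{n−1} → ℤ^d determined by Ā is not surjective. Then there exist an invertible d × d integer matrix P (with det P = ±1), an integer m > 1, and integers a_{ij} (1 ≤ i ≤ d, 1 ≤ j ≤ n) such that: (1) PA has first row (a₁₁, m·a₁₂, …, m·a₁ₙ) and i-th row (a_{i1}, a_{i2}, …, a_{in}) for 2 ≤ i ≤ d; (2) gcd(a₁₁, m) = 1; (3) the d × n matrix with first row (1, a₁₂, …, a₁ₙ) and i-th row (0, a_{i2}, …, a_{in}) for 2 ≤ i ≤ d determines a surjection ℤⁿ → ℤ^d. -/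

import Mathlib

/-!
Let `M ⊆ ℤ^d` be the lattice spanned by the columns of `Ā` and `c` the first column of `A`.
Surjectivity of `A` says `ℤ^d = M + ℤ c`, so `ℤ^d ⧸ M` is cyclic, generated by `c`; it is
finite since `Ā` has full rank and nontrivial since `Ā` is not onto, so it is `ℤ/m` with
`m > 1`. Lifting `ℤ^d → ℤ/m` to a functional and dividing it by the gcd of its coefficients
(which is prime to `m`) gives a primitive functional `ℓ` with `M = {x | m ∣ ℓ x}` and `ℓ c`
prime to `m`. A unimodular `P` with first row `ℓ` makes the first row of `PĀ` divisible by `m`,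
and the lower rows of `PĀ` map onto `ℤ^(d-1)` because `P` maps `ker ℓ ⊆ M` onto
`0 × ℤ^(d-1)`.
-/

open Matrix Submodule

section Columns

variable {R : Type*} [CommRing R] {m : Type*} {n : ℕ}

theorem Matrix.mulVec_cons_eq (A : Matrix m (Fin (n + 1)) R) (t : R) (w : Fin n → R) :
    A *ᵥ Fin.cons t w = t • A.col 0 + A.submatrix id Fin.succ *ᵥ w :=
  Matrix.mulVec_cons A t w

theorem Matrix.range_submatrix_succ_sup_span_col_zero_eq_top {A : Matrix m (Fin (n + 1)) R}
    (hA : Function.Surjective A.mulVec) :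
    LinearMap.range (A.submatrix id Fin.succ).mulVecLin ⊔ R ∙ A.col 0 = ⊤ := by
  refine eq_top_iff'.2 fun x => ?_
  obtain ⟨v, rfl⟩ := hA x
  rw [← Fin.cons_self_tail v, mulVec_cons_eq]
  exact add_mem (mem_sup_right (smul_mem _ _ (mem_span_singleton_self _)))
    (mem_sup_left ⟨_, rfl⟩)

theorem Matrix.mulVec_surjective_of_col_zero_eq_single [Fintype m] [DecidableEq m]
    {i₀ : m} {B : Matrix m (Fin (n + 1)) R} {C : Matrix m (Fin n) R}
    (h₀ : ∀ i, B i 0 = if i = i₀ then 1 else 0)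
    (hBC : ∀ i ≠ i₀, ∀ j, B i j.succ = C i j)
    (hC : ∀ y : m → R, ∃ w, ∀ i ≠ i₀, (C *ᵥ w) i = y i) :
    Function.Surjective B.mulVec := by
  intro y
  obtain ⟨w, hw⟩ := hC y
  refine ⟨Fin.cons (y i₀ - (B.submatrix id Fin.succ *ᵥ w) i₀) w, funext fun i => ?_⟩
  rw [mulVec_cons_eq]
  by_cases hi : i = i₀
  · subst hi; simp [h₀]
  · simp [h₀, hi, ← hw i hi, mulVec, dotProduct, hBC i hi]

theorem Matrix.exists_mul_mulVec_eq_of_ne [Fintype m] [DecidableEq m] {ι : Type*} [Fintype ι]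
    {i₀ : m} {P : Matrix m m R} (hP : IsUnit P.det) {ℓ : (m → R) →ₗ[R] R}
    (hPℓ : ∀ x, (P *ᵥ x) i₀ = ℓ x) {B : Matrix m ι R}
    (hB : LinearMap.ker ℓ ≤ LinearMap.range B.mulVecLin) (y : m → R) :
    ∃ w, ∀ i ≠ i₀, ((P * B) *ᵥ w) i = y i := by
  have hPz : P *ᵥ (P⁻¹ *ᵥ Function.update y i₀ 0) = Function.update y i₀ 0 := by
    rw [mulVec_mulVec, mul_nonsing_inv P hP, one_mulVec]
  obtain ⟨w, hw⟩ := hB (LinearMap.mem_ker.2 (by rw [← hPℓ, hPz, Function.update_self]))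
  refine ⟨w, fun i hi => ?_⟩
  rw [← mulVec_mulVec, ← B.mulVecLin_apply, hw, hPz, Function.update_of_ne hi]

end Columns

theorem Matrix.exists_smul_mem_range_mulVecLin_of_rank_map_eq {R K m ι : Type*} [CommRing R]
    [IsDomain R] [Field K] [Algebra R K] [IsFractionRing R K] [Fintype m] [Fintype ι]
    {B : Matrix m ι R} (hB : (B.map (algebraMap R K)).rank = Fintype.card m) (x : m → R) :
    ∃ N : R, N ≠ 0 ∧ N • x ∈ LinearMap.range B.mulVecLin := by
  have htop : LinearMap.range (B.map (algebraMap R K)).mulVecLin = ⊤ :=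
    eq_top_of_finrank_eq (by rw [Module.finrank_fintype_fun_eq_card]; exact hB)
  obtain ⟨w, hw⟩ := htop.ge (mem_top (x := algebraMap R K ∘ x))
  obtain ⟨b, hb⟩ := IsLocalization.exist_integer_multiples (nonZeroDivisors R) Finset.univ w
  choose v hv using fun j => hb j (Finset.mem_univ j)
  refine ⟨b, nonZeroDivisors.coe_ne_zero b, v, funext fun i => IsFractionRing.injective R K ?_⟩
  have hvw : algebraMap R K ∘ v = (b : R) • w := funext hv
  rw [mulVecLin_apply, RingHom.map_mulVec, hvw, mulVec_smul, ← mulVecLin_apply, hw]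
  simp [Algebra.smul_def]

section Functionals

variable {R V : Type*} [CommRing R] [IsDomain R] [AddCommGroup V] [Module R V]

theorem LinearMap.exists_surjective_mul_eq_of_range_eq_span
    (f : V →ₗ[R] R) {g : R} (hg : g ≠ 0) (hf : LinearMap.range f = R ∙ g) :
    ∃ ℓ : V →ₗ[R] R, Function.Surjective ℓ ∧ ∀ x, f x = ℓ x * g := by
  let e := LinearEquiv.toSpanNonzeroSingleton R R g hg
  refine ⟨e.symm ∘ₗ f.codRestrict (R ∙ g) fun x => hf ▸ LinearMap.mem_range_self f x,
    e.symm.surjective.comp fun y => ?_, fun x => ?_⟩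
  · obtain ⟨x, hx⟩ : (y : R) ∈ LinearMap.range f := by rw [hf]; exact y.2
    exact ⟨x, Subtype.ext hx⟩
  · rw [LinearMap.comp_apply, LinearEquiv.coe_coe, ← smul_eq_mul,
      LinearEquiv.toSpanNonzeroSingleton_symm_apply_smul, LinearMap.codRestrict_apply]

theorem exists_surjective_functional_mem_iff_dvd [IsPrincipalIdealRing R] [Module.Projective R V]
    {M : Submodule R V} {c : V} (hc : M ⊔ R ∙ c = ⊤) (hM : M ≠ ⊤) :
    ∃ (ℓ : V →ₗ[R] R) (m : R), Function.Surjective ℓ ∧ ¬IsUnit m ∧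
      IsCoprime (ℓ c) m ∧ ∀ x, x ∈ M ↔ m ∣ ℓ x := by
  have hq : Function.Surjective (M.mkQ ∘ₗ LinearMap.toSpanSingleton R V c) := by
    intro y
    obtain ⟨x, rfl⟩ := M.mkQ_surjective y
    obtain ⟨y, hy, z, hz, rfl⟩ := mem_sup.1 (hc ▸ mem_top : x ∈ M ⊔ R ∙ c)
    obtain ⟨t, rfl⟩ := mem_span_singleton.1 hz
    exact ⟨t, by simp [(Submodule.Quotient.mk_eq_zero M).2 hy]⟩
  obtain ⟨f, hf⟩ := Module.projective_lifting_property _ M.mkQ hq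
  have hfx : ∀ x, x - f x • c ∈ M := fun x =>
    (Submodule.Quotient.eq M).1 (LinearMap.congr_fun hf x).symm
  set m := IsPrincipal.generator (M.comap (LinearMap.toSpanSingleton R V c))
  have hmc : ∀ t : R, t • c ∈ M ↔ m ∣ t := fun t => by
    rw [← IsPrincipal.mem_iff_generator_dvd, mem_comap, LinearMap.toSpanSingleton_apply]
  have hfM : ∀ x, x ∈ M ↔ m ∣ f x := fun x => by
    rw [← hmc]
    exact ⟨fun hx => by simpa using M.sub_mem hx (hfx x),
      fun h => by simpa using M.add_mem (hfx x) h⟩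
  have hm : ¬IsUnit m := fun hm => hM <| by
    rw [← hc, eq_comm, sup_eq_left, span_singleton_le_iff_mem, ← one_smul R c, hmc]
    exact hm.dvd
  obtain ⟨k, hk⟩ : m ∣ 1 - f c := by
    rw [← hmc, sub_smul, one_smul]
    exact hfx c
  set g := IsPrincipal.generator (LinearMap.range f)
  -- `g` is the gcd of the values of `f`; it is prime to `m` because `f c ≡ 1 (mod m)`
  obtain ⟨l, hl⟩ : g ∣ f c :=
    (IsPrincipal.mem_iff_generator_dvd _).1 (LinearMap.mem_range_self f c)
  have hgm : IsCoprime g m := ⟨l, k, by linear_combination -hl - hk⟩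
  have hg : g ≠ 0 := fun hg => hm (isCoprime_zero_left.1 (hg ▸ hgm))
  obtain ⟨ℓ, hℓ, hfℓ⟩ := f.exists_surjective_mul_eq_of_range_eq_span hg
    (IsPrincipal.span_singleton_generator _).symm
  refine ⟨ℓ, m, hℓ, hm, ⟨g, k, by linear_combination -hfℓ c - hk⟩, fun x => ?_⟩
  rw [hfM, hfℓ]
  exact ⟨hgm.symm.dvd_of_dvd_mul_right, (Dvd.dvd.mul_right · g)⟩

end Functionals

section Unimodular

variable {R : Type*} [CommRing R] [IsDomain R] [IsPrincipalIdealRing R] {d : ℕ}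

theorem exists_isUnit_det_mulVec_apply_zero (ℓ : (Fin (d + 1) → R) →ₗ[R] R)
    (hℓ : Function.Surjective ℓ) :
    ∃ P : Matrix (Fin (d + 1)) (Fin (d + 1)) R, IsUnit P.det ∧ ∀ x, (P *ᵥ x) 0 = ℓ x := by
  obtain ⟨s, hs⟩ := hℓ 1
  have hK : Module.finrank R (LinearMap.ker ℓ) = d := by
    have := (LinearMap.ker ℓ).finrank_quotient_add_finrank
    rw [(ℓ.quotKerEquivOfSurjective hℓ).finrank_eq, Module.finrank_self,
      Module.finrank_fin_fun] at this
    omega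
  let b := Module.Basis.mkFinCons s (Module.finBasisOfFinrankEq R _ hK)
    (fun t x hx h => by simpa [hs, LinearMap.mem_ker.1 hx] using congr_arg ℓ h)
    (fun z => ⟨-ℓ z, by simp [hs]⟩)
  have hb : b.coord 0 = ℓ := b.ext fun i => by
    rw [Module.Basis.coord_apply, Module.Basis.repr_self]
    refine Fin.cases ?_ (fun i => ?_) i
    · simp [b, hs]
    · simp [b, Fin.succ_ne_zero]
  -- the rows of `P` are the coordinate functionals of the basis `s, b₁, …, b_d`
  refine ⟨LinearMap.toMatrix' b.equivFun.toLinearMap, ?_, fun x => ?_⟩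
  · rw [LinearMap.det_toMatrix']
    exact b.equivFun.isUnit_det'
  · rw [LinearMap.toMatrix'_mulVec, ← hb]
    rfl

end Unimodular

theorem exists_unimodular_first_row_dvd_of_not_surjective {d n : ℕ}
    {A : Matrix (Fin (d + 1)) (Fin (n + 1)) ℤ} (hA : Function.Surjective A.mulVec)
    (hrank : ((A.submatrix id Fin.succ).map (Int.cast : ℤ → ℚ)).rank = d + 1)
    (hAbar : ¬Function.Surjective (A.submatrix id Fin.succ).mulVec) :
    ∃ (P : Matrix (Fin (d + 1)) (Fin (d + 1)) ℤ) (m : ℤ), IsUnit P.det ∧ 1 < m ∧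
      IsCoprime ((P * A) 0 0) m ∧ (∀ j : Fin n, m ∣ (P * A) 0 j.succ) ∧
      ∀ y : Fin (d + 1) → ℤ, ∃ w, ∀ i ≠ 0,
        ((P * A.submatrix id Fin.succ) *ᵥ w) i = y i := by
  obtain ⟨ℓ, m, hℓ, hm, hcop, hM⟩ := exists_surjective_functional_mem_iff_dvd
    (range_submatrix_succ_sup_span_col_zero_eq_top hA) (mt LinearMap.range_eq_top.1 hAbar)
  obtain ⟨s, hs⟩ := hℓ 1
  obtain ⟨N, hN, hNs⟩ :=
    (A.submatrix id Fin.succ).exists_smul_mem_range_mulVecLin_of_rank_map_eq (K := ℚ)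
      (by rw [Fintype.card_fin]; exact hrank) s
  have hm0 : m ≠ 0 := ne_zero_of_dvd_ne_zero hN <| by
    rw [← mul_one N, ← hs, ← smul_eq_mul, ← map_smul]
    exact (hM _).1 hNs
  obtain ⟨P, hP, hPℓ⟩ := exists_isUnit_det_mulVec_apply_zero ℓ hℓ
  have hPA : ∀ j, (P * A) 0 j = ℓ (A.col j) := fun j => hPℓ (A.col j)
  refine ⟨P, |m|, hP, ?_, hPA 0 ▸ hcop.abs_right, fun j => ?_,
    exists_mul_mulVec_eq_of_ne hP hPℓ fun x hx => (hM x).2 ?_⟩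
  · have := abs_pos.2 hm0
    have := mt Int.isUnit_iff_abs_eq.2 hm
    omega
  · rw [abs_dvd, hPA]
    exact (hM _).1 ⟨Pi.single j 1, by rw [mulVecLin_apply, mulVec_single_one]; rfl⟩
  · rw [LinearMap.mem_ker.1 hx]
    exact dvd_zero m

/-- **Lemma 5.** If `A` determines a surjection `ℤⁿ → ℤ^d`, and the matrix `Ā` obtained by
deleting the first column of `A` has rank `d` over `ℚ` but does not determine a surjection,
then there are an invertible integer matrix `P`, an integer `m > 1` and integers `aᵢⱼ` such
that `P·A` has first row `(a₁₁, m·a₁₂, …, m·a₁ₙ)` and `i`-th row `(aᵢ₁, …, aᵢₙ)` for `i ≥ 2`,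
with `gcd(a₁₁, m) = 1`, and such that the matrix with first row `(1, a₁₂, …, a₁ₙ)` and `i`-th
row `(0, aᵢ₂, …, aᵢₙ)` determines a surjection `ℤⁿ → ℤ^d`. -/
theorem stmt_7 (n d : ℕ) (hd : 0 < d) (hdn : d < n)
    (A : Matrix (Fin d) (Fin n) ℤ)
    (hAsurj : Function.Surjective A.mulVec)
    (hrank : ((A.submatrix id fun j : Fin (n - 1) =>
        Fin.cast (by omega) j.succ).map (Int.cast : ℤ → ℚ)).rank = d)
    (hAbar : ¬ Function.Surjective
      (A.submatrix id fun j : Fin (n - 1) => Fin.cast (by omega) j.succ).mulVec) :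
    ∃ (P : Matrix (Fin d) (Fin d) ℤ) (m : ℤ) (a : Matrix (Fin d) (Fin n) ℤ),
      IsUnit P.det ∧ 1 < m ∧
      (P * A) ⟨0, hd⟩ ⟨0, by omega⟩ = a ⟨0, hd⟩ ⟨0, by omega⟩ ∧
      (∀ j : Fin n, j ≠ ⟨0, by omega⟩ → (P * A) ⟨0, hd⟩ j = m * a ⟨0, hd⟩ j) ∧
      (∀ i : Fin d, i ≠ ⟨0, hd⟩ → ∀ j : Fin n, (P * A) i j = a i j) ∧
      Int.gcd (a ⟨0, hd⟩ ⟨0, by omega⟩) m = 1 ∧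
      Function.Surjective (Matrix.mulVec (fun (i : Fin d) (j : Fin n) =>
        if j = ⟨0, by omega⟩ then (if i = ⟨0, hd⟩ then 1 else 0) else a i j)) := by
  obtain ⟨d, rfl⟩ : ∃ d', d = d' + 1 := ⟨d - 1, by omega⟩
  obtain ⟨n, rfl⟩ : ∃ n', n = n' + 1 := ⟨n - 1, by omega⟩
  simp only [Fin.zero_eta]
  -- now `Fin.cast _ j.succ` in `hrank` and `hAbar` is defeq to `j.succ`
  obtain ⟨P, m, hP, hm, hcop, hdvd, hsurj⟩ :=
    exists_unimodular_first_row_dvd_of_not_surjective hAsurj hrank hAbar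
  refine ⟨P, m, Matrix.of fun i j => if i = 0 ∧ j ≠ 0 then (P * A) i j / m else (P * A) i j,
    hP, hm, by simp, fun j hj => ?_, fun i hi j => by simp [hi], ?_, ?_⟩
  · obtain ⟨j, rfl⟩ := Fin.exists_succ_eq.2 hj
    simp [hj, Int.mul_ediv_cancel' (hdvd j)]
  · simpa [← Int.isCoprime_iff_gcd_eq_one] using hcop
  · exact mulVec_surjective_of_col_zero_eq_single (C := P * A.submatrix id Fin.succ)
      (fun i => by by_cases hi : i = 0 <;> simp [hi]) (fun i hi j => by simp [hi]; rfl) hsurj
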